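/- A commutative †-Frobenius monoid (H, m, u) is special if and only if its orthogonal basis of copyable elements is orthonormal: m ∘ m† = id_H holds if and only if every copyable element ψ satisfies ‖ψ‖ = 1. Moreover, if φ : ι → H enumerates an orthonormal set of copyable elements forming a basis, then m ∘ m† is the map x ↦ Σ_i ⟨φ i, x⟩ · φ i. -/

import Mathlib

noncomputable section

open scoped TensorProduct ComplexConjugate InnerProductSpace

open scoped TensorProduct ComplexConjugate InnerProductSpace

variable {H : Type*} [NormedAddCommGroup H] [InnerProductSpace ℂ H] [FiniteDimensional ℂ H]

namespace TensorIP

variable (H) in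
/-- A basis of `H ⊗ H` built from an orthonormal basis of `H`. -/
def tb : Module.Basis (Fin (Module.finrank ℂ H) × Fin (Module.finrank ℂ H)) ℂ (H ⊗[ℂ] H) :=
  Module.Basis.tensorProduct (stdOrthonormalBasis ℂ H).toBasis (stdOrthonormalBasis ℂ H).toBasis

variable (H) in
/-- The canonical inner product space structure on `H ⊗ H`, which is determined by
`⟪a ⊗ b, c ⊗ d⟫ = ⟪a,c⟫ * ⟪b,d⟫` (see `TensorIP.inner_tmul` below). -/
def core : InnerProductSpace.Core ℂ (H ⊗[ℂ] H) where
  inner x y := ∑ p, conj ((tb H).repr x p) * ((tb H).repr y p)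
  conj_inner_symm x y := by
    simp only [map_sum, map_mul, starRingEnd_self_apply]
    exact Finset.sum_congr rfl fun p _ => by ring
  re_inner_nonneg x := by
    show 0 ≤ RCLike.re (∑ p, conj ((tb H).repr x p) * ((tb H).repr x p))
    have h : ∀ p : Fin (Module.finrank ℂ H) × Fin (Module.finrank ℂ H),
        conj ((tb H).repr x p) * ((tb H).repr x p)
          = ((Complex.normSq ((tb H).repr x p) : ℝ) : ℂ) := fun p => by
      rw [mul_comm, Complex.mul_conj]
    simp only [h]
    rw [map_sum]
    refine Finset.sum_nonneg fun p _ => ?_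
    simp [Complex.normSq_nonneg]
  add_left x y z := by
    simp only [map_add, Finsupp.add_apply]
    rw [← Finset.sum_add_distrib]
    exact Finset.sum_congr rfl fun p _ => by ring
  smul_left x y r := by
    simp only [map_smul, Finsupp.smul_apply, smul_eq_mul, map_mul, Finset.mul_sum]
    exact Finset.sum_congr rfl fun p _ => by ring
  definite x hx := by
    have hx' : ∑ p, conj ((tb H).repr x p) * ((tb H).repr x p) = 0 := hx
    have h2 : ∑ p, ((Complex.normSq ((tb H).repr x p) : ℝ) : ℂ) = 0 := by
      rw [← hx']
      exact Finset.sum_congr rfl fun p _ => by rw [mul_comm, Complex.mul_conj]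
    have h3 : ∑ p, Complex.normSq ((tb H).repr x p) = 0 := by exact_mod_cast h2
    have h4 : ∀ p ∈ Finset.univ, Complex.normSq ((tb H).repr x p) = 0 :=
      (Finset.sum_eq_zero_iff_of_nonneg fun p _ => Complex.normSq_nonneg _).mp h3
    have h5 : (tb H).repr x = 0 := by
      ext p
      exact Complex.normSq_eq_zero.mp (h4 p (Finset.mem_univ p))
    simpa using (tb H).repr.map_eq_zero_iff.mp h5

instance : NormedAddCommGroup (H ⊗[ℂ] H) :=
  @InnerProductSpace.Core.toNormedAddCommGroup ℂ (H ⊗[ℂ] H) _ _ _ (core H)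

instance : InnerProductSpace ℂ (H ⊗[ℂ] H) := InnerProductSpace.ofCore (core H).toCore

attribute [-instance] TensorProduct.instInner

theorem inner_tmul (a b c d : H) :
    ⟪a ⊗ₜ[ℂ] b, c ⊗ₜ[ℂ] d⟫_ℂ = ⟪a, c⟫_ℂ * ⟪b, d⟫_ℂ := by
  have key : ∀ (x y : H) (p : Fin (Module.finrank ℂ H) × Fin (Module.finrank ℂ H)),
      (tb H).repr (x ⊗ₜ[ℂ] y) p
        = ⟪(stdOrthonormalBasis ℂ H) p.1, x⟫_ℂ * ⟪(stdOrthonormalBasis ℂ H) p.2, y⟫_ℂ := by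
    rintro x y ⟨i, j⟩
    rw [tb, Module.Basis.tensorProduct_repr_tmul_apply, smul_eq_mul,
      OrthonormalBasis.coe_toBasis_repr_apply, OrthonormalBasis.coe_toBasis_repr_apply,
      OrthonormalBasis.repr_apply_apply, OrthonormalBasis.repr_apply_apply, mul_comm]
  show (∑ p, conj ((tb H).repr (a ⊗ₜ[ℂ] b) p) * ((tb H).repr (c ⊗ₜ[ℂ] d) p)) = _
  simp only [key, map_mul]
  rw [← Finset.univ_product_univ, Finset.sum_product]
  have h : ∀ i j : Fin (Module.finrank ℂ H),
      (conj ⟪(stdOrthonormalBasis ℂ H) i, a⟫_ℂ * conj ⟪(stdOrthonormalBasis ℂ H) j, b⟫_ℂ) *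
        (⟪(stdOrthonormalBasis ℂ H) i, c⟫_ℂ * ⟪(stdOrthonormalBasis ℂ H) j, d⟫_ℂ)
      = (⟪a, (stdOrthonormalBasis ℂ H) i⟫_ℂ * ⟪(stdOrthonormalBasis ℂ H) i, c⟫_ℂ) *
        (⟪b, (stdOrthonormalBasis ℂ H) j⟫_ℂ * ⟪(stdOrthonormalBasis ℂ H) j, d⟫_ℂ) := by
    intro i j
    rw [inner_conj_symm, inner_conj_symm]; ring
  simp only [h]
  rw [← Finset.sum_mul_sum]
  rw [OrthonormalBasis.sum_inner_mul_inner, OrthonormalBasis.sum_inner_mul_inner]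

end TensorIP

/-- `(H, m, u)` is a commutative †-Frobenius monoid: `m` is associative and commutative,
`u 1` is a two-sided unit for `m`, and the Frobenius law
`(m ⊗ id) ∘ (id ⊗ δ) = δ ∘ m` holds, where `δ := m†`. -/
def IsFrobenius (m : H ⊗[ℂ] H →ₗ[ℂ] H) (u : ℂ →ₗ[ℂ] H) : Prop :=
  (m ∘ₗ TensorProduct.map m LinearMap.id
      = m ∘ₗ TensorProduct.map LinearMap.id m ∘ₗ (TensorProduct.assoc ℂ H H H).toLinearMap)
    ∧ (m ∘ₗ (TensorProduct.comm ℂ H H).toLinearMap = m)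
    ∧ (∀ x : H, m (u 1 ⊗ₜ[ℂ] x) = x)
    ∧ (∀ x : H, m (x ⊗ₜ[ℂ] u 1) = x)
    ∧ (TensorProduct.map m LinearMap.id ∘ₗ (TensorProduct.assoc ℂ H H H).symm.toLinearMap
        ∘ₗ TensorProduct.map LinearMap.id (LinearMap.adjoint m)
      = LinearMap.adjoint m ∘ₗ m)

/-- `ψ` is a copyable element: `δ ψ = ψ ⊗ ψ` and `ε ψ = 1`, where `δ := m†`, `ε := u†`. -/
def Copyable (m : H ⊗[ℂ] H →ₗ[ℂ] H) (u : ℂ →ₗ[ℂ] H) (ψ : H) : Prop :=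
  LinearMap.adjoint m ψ = ψ ⊗ₜ[ℂ] ψ ∧ LinearMap.adjoint u ψ = 1


section Aux

open TensorProduct

attribute [-instance] TensorProduct.instInner

variable {m : H ⊗[ℂ] H →ₗ[ℂ] H} {u : ℂ →ₗ[ℂ] H}

private lemma inner_map_map (A B : H →ₗ[ℂ] H) (s t : H ⊗[ℂ] H) :
    ⟪TensorProduct.map A B s, t⟫_ℂ
      = ⟪s, TensorProduct.map (LinearMap.adjoint A) (LinearMap.adjoint B) t⟫_ℂ := by
  induction s using TensorProduct.induction_on with
  | zero => simp
  | tmul a b =>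
    induction t using TensorProduct.induction_on with
    | zero => simp
    | tmul c d =>
      simp only [TensorProduct.map_tmul, TensorIP.inner_tmul,
        LinearMap.adjoint_inner_right]
    | add x y hx hy => simp only [map_add, inner_add_right, hx, hy]
  | add x y hx hy => simp only [map_add, inner_add_left, hx, hy]

private lemma map_adjoint (A B : H →ₗ[ℂ] H) :
    LinearMap.adjoint (TensorProduct.map A B)
      = TensorProduct.map (LinearMap.adjoint A) (LinearMap.adjoint B) := by
  rw [eq_comm, LinearMap.eq_adjoint_iff]
  intro s t
  rw [_root_.inner_map_map, LinearMap.adjoint_adjoint, LinearMap.adjoint_adjoint]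

private lemma inner_comm_comm (s t : H ⊗[ℂ] H) :
    ⟪(TensorProduct.comm ℂ H H) s, t⟫_ℂ = ⟪s, (TensorProduct.comm ℂ H H) t⟫_ℂ := by
  induction s using TensorProduct.induction_on with
  | zero => simp
  | tmul a b =>
    induction t using TensorProduct.induction_on with
    | zero => simp
    | tmul c d =>
      simp only [TensorProduct.comm_tmul, TensorIP.inner_tmul]
      ring
    | add x y hx hy => simp only [map_add, inner_add_right, hx, hy]
  | add x y hx hy => simp only [map_add, inner_add_left, hx, hy]

private lemma comm_adjoint :
    LinearMap.adjoint (TensorProduct.comm ℂ H H).toLinearMap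
      = (TensorProduct.comm ℂ H H).toLinearMap :=
  ((LinearMap.eq_adjoint_iff _ _).mpr fun s t => _root_.inner_comm_comm s t).symm

private lemma comm_map (A B : H →ₗ[ℂ] H) (t : H ⊗[ℂ] H) :
    (TensorProduct.comm ℂ H H) (TensorProduct.map A B t)
      = TensorProduct.map B A ((TensorProduct.comm ℂ H H) t) := by
  induction t using TensorProduct.induction_on with
  | zero => simp
  | tmul a b => simp
  | add x y hx hy => simp only [map_add, hx, hy]

private lemma mul_commH (hc : m ∘ₗ (TensorProduct.comm ℂ H H).toLinearMap = m) (x y : H) :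
    m (x ⊗ₜ[ℂ] y) = m (y ⊗ₜ[ℂ] x) := by
  have h := congrArg (fun f => f (y ⊗ₜ[ℂ] x)) hc
  simpa using h

private lemma mul_assocH
    (ha : m ∘ₗ TensorProduct.map m LinearMap.id
      = m ∘ₗ TensorProduct.map LinearMap.id m ∘ₗ (TensorProduct.assoc ℂ H H H).toLinearMap)
    (x y z : H) :
    m (m (x ⊗ₜ[ℂ] y) ⊗ₜ[ℂ] z) = m (x ⊗ₜ[ℂ] m (y ⊗ₜ[ℂ] z)) := by
  have h := congrArg (fun f => f ((x ⊗ₜ[ℂ] y) ⊗ₜ[ℂ] z)) ha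
  simpa using h



private lemma frob_apply
    (hf : TensorProduct.map m LinearMap.id ∘ₗ (TensorProduct.assoc ℂ H H H).symm.toLinearMap
        ∘ₗ TensorProduct.map LinearMap.id (LinearMap.adjoint m)
      = LinearMap.adjoint m ∘ₗ m) (x w : H) :
    TensorProduct.map (m ∘ₗ TensorProduct.mk ℂ H H x) LinearMap.id (LinearMap.adjoint m w)
      = LinearMap.adjoint m (m (x ⊗ₜ[ℂ] w)) := by
  have h1 := congrArg (fun f => f (x ⊗ₜ[ℂ] w)) hf
  simp only [LinearMap.comp_apply, TensorProduct.map_tmul, LinearMap.id_coe, id_eq,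
    LinearEquiv.coe_coe] at h1
  rw [← h1]
  generalize (LinearMap.adjoint m) w = t
  induction t using TensorProduct.induction_on with
  | zero => simp
  | tmul a b => simp [TensorProduct.assoc_symm_tmul]
  | add s t hs ht => simp only [map_add, TensorProduct.tmul_add, hs, ht]

private lemma cocomm (hc : m ∘ₗ (TensorProduct.comm ℂ H H).toLinearMap = m) (x : H) :
    (TensorProduct.comm ℂ H H) (LinearMap.adjoint m x) = LinearMap.adjoint m x := by
  have h := congrArg LinearMap.adjoint hc
  rw [LinearMap.adjoint_comp, comm_adjoint] at h
  exact congrArg (fun f => f x) h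

private lemma delta_eq (hc : m ∘ₗ (TensorProduct.comm ℂ H H).toLinearMap = m)
    (hf : TensorProduct.map m LinearMap.id ∘ₗ (TensorProduct.assoc ℂ H H H).symm.toLinearMap
        ∘ₗ TensorProduct.map LinearMap.id (LinearMap.adjoint m)
      = LinearMap.adjoint m ∘ₗ m)
    (hur : ∀ x : H, m (x ⊗ₜ[ℂ] u 1) = x) (x : H) :
    LinearMap.adjoint m x
      = TensorProduct.map LinearMap.id (m ∘ₗ TensorProduct.mk ℂ H H x)
          (LinearMap.adjoint m (u 1)) := by
  have h1 : TensorProduct.map (m ∘ₗ TensorProduct.mk ℂ H H x) LinearMap.id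
      (LinearMap.adjoint m (u 1)) = LinearMap.adjoint m x := by
    rw [frob_apply hf, hur]
  calc LinearMap.adjoint m x
      = (TensorProduct.comm ℂ H H) (LinearMap.adjoint m x) := (cocomm hc x).symm
    _ = (TensorProduct.comm ℂ H H) (TensorProduct.map (m ∘ₗ TensorProduct.mk ℂ H H x)
          LinearMap.id (LinearMap.adjoint m (u 1))) := by rw [h1]
    _ = TensorProduct.map LinearMap.id (m ∘ₗ TensorProduct.mk ℂ H H x)
          ((TensorProduct.comm ℂ H H) (LinearMap.adjoint m (u 1))) := comm_map _ _ _
    _ = _ := by rw [cocomm hc]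

private lemma exists_star (hfrob : IsFrobenius m u) (n : H) :
    ∃ s : H, LinearMap.adjoint (m ∘ₗ TensorProduct.mk ℂ H H n)
      = m ∘ₗ TensorProduct.mk ℂ H H s := by
  obtain ⟨ha, hc, hul, hur, hf⟩ := hfrob
  set s : H := TensorProduct.lift ((LinearMap.lsmul ℂ H) ∘ₗ (innerₛₗ ℂ n))
    (LinearMap.adjoint m (u 1)) with hs
  refine ⟨s, ?_⟩
  have key : ∀ y w : H, ⟪m (n ⊗ₜ[ℂ] y), w⟫_ℂ = ⟪y, m (s ⊗ₜ[ℂ] w)⟫_ℂ := by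
    intro y w
    rw [← LinearMap.adjoint_inner_right m, delta_eq hc hf hur w, hs]
    generalize (LinearMap.adjoint m) (u 1) = t
    induction t using TensorProduct.induction_on with
    | zero => simp
    | tmul a b =>
      simp only [TensorProduct.map_tmul, LinearMap.id_coe, id_eq, TensorProduct.lift.tmul,
        LinearMap.comp_apply, TensorProduct.mk_apply, innerₛₗ_apply_apply, LinearMap.lsmul_apply,
        TensorIP.inner_tmul]
      rw [← TensorProduct.smul_tmul', map_smul, inner_smul_right, mul_commH hc w b]
    | add p q hp hq =>
      simp only [map_add, TensorProduct.add_tmul, inner_add_right, hp, hq]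
  have h2 : (m ∘ₗ TensorProduct.mk ℂ H H n)
      = LinearMap.adjoint (m ∘ₗ TensorProduct.mk ℂ H H s) :=
    (LinearMap.eq_adjoint_iff _ _).mpr fun y w => key y w
  rw [h2, LinearMap.adjoint_adjoint]

private lemma adjoint_idH :
    LinearMap.adjoint (LinearMap.id : H →ₗ[ℂ] H) = LinearMap.id := by
  rw [eq_comm, LinearMap.eq_adjoint_iff]
  intro x y
  rfl

private lemma inner_map_map' (A B : H →ₗ[ℂ] H) (s t : H ⊗[ℂ] H) :
    ⟪s, TensorProduct.map A B t⟫_ℂ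
      = ⟪TensorProduct.map (LinearMap.adjoint A) (LinearMap.adjoint B) s, t⟫_ℂ := by
  rw [_root_.inner_map_map (LinearMap.adjoint A) (LinearMap.adjoint B), LinearMap.adjoint_adjoint,
    LinearMap.adjoint_adjoint]

private lemma reduced (hfrob : IsFrobenius m u) (n : H) (hn : m (n ⊗ₜ[ℂ] n) = 0) : n = 0 := by
  obtain ⟨s, hs⟩ := exists_star hfrob n
  obtain ⟨ha, hc, hul, hur, hf⟩ := hfrob
  set N : H →ₗ[ℂ] H := m ∘ₗ TensorProduct.mk ℂ H H n with hN
  set S : H →ₗ[ℂ] H := m ∘ₗ TensorProduct.mk ℂ H H s with hS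
  have hNapp : ∀ v, N v = m (n ⊗ₜ[ℂ] v) := fun v => rfl
  have hSapp : ∀ v, S v = m (s ⊗ₜ[ℂ] v) := fun v => rfl
  have hNN : ∀ v, N (N v) = 0 := by
    intro v
    rw [hNapp, hNapp, ← mul_assocH ha, hn, TensorProduct.zero_tmul, map_zero]
  have hNS : ∀ v, N (S v) = S (N v) := by
    intro v
    rw [hNapp, hSapp, hNapp, hSapp, ← mul_assocH ha, ← mul_assocH ha, mul_commH hc n s]
  have hT2 : ∀ v, S (N (S (N v))) = 0 := by
    intro v
    rw [hNS (N v), hNN v, map_zero, map_zero]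
  have hTv : ∀ v, S (N v) = 0 := by
    intro v
    have hsa : ∀ p q : H, ⟪S (N p), q⟫_ℂ = ⟪p, S (N q)⟫_ℂ := by
      intro p q
      have h1 : S (N p) = (LinearMap.adjoint N) (N p) := by rw [hs]
      have h2 : S (N q) = (LinearMap.adjoint N) (N q) := by rw [hs]
      rw [h1, h2, LinearMap.adjoint_inner_left, LinearMap.adjoint_inner_right]
    have : ⟪S (N v), S (N v)⟫_ℂ = 0 := by
      rw [hsa, hT2, inner_zero_right]
    exact inner_self_eq_zero.mp this
  have hNv : ∀ v, N v = 0 := by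
    intro v
    have : ⟪N v, N v⟫_ℂ = 0 := by
      have h1 : (LinearMap.adjoint N) (N v) = 0 := by rw [hs]; exact hTv v
      rw [← LinearMap.adjoint_inner_right N, h1, inner_zero_right]
    exact inner_self_eq_zero.mp this
  have h := hNv (u 1)
  rw [hNapp, hur] at h
  exact h

private lemma copyable_inner_mul {ψ : H} (hψ : Copyable m u ψ) (x y : H) :
    ⟪ψ, m (x ⊗ₜ[ℂ] y)⟫_ℂ = ⟪ψ, x⟫_ℂ * ⟪ψ, y⟫_ℂ := by
  rw [← LinearMap.adjoint_inner_left m, hψ.1, TensorIP.inner_tmul]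

private lemma copyable_inner_one {ψ : H} (hψ : Copyable m u ψ) : ⟪u 1, ψ⟫_ℂ = 1 := by
  have h := LinearMap.adjoint_inner_right u (1 : ℂ) ψ
  rw [hψ.2] at h
  simpa [RCLike.inner_apply] using h.symm

private lemma copyable_ne_zero {ψ : H} (hψ : Copyable m u ψ) : ψ ≠ 0 := by
  intro h
  have h2 := copyable_inner_one hψ
  rw [h, inner_zero_right] at h2
  exact zero_ne_one h2

private lemma copyable_inner_eq {ψ φ : H} (hfrob : IsFrobenius m u)
    (hψ : Copyable m u ψ) (hφ : Copyable m u φ) :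
    ⟪ψ, φ⟫_ℂ = 0 ∨ ⟪ψ, φ⟫_ℂ = ⟪ψ, ψ⟫_ℂ := by
  obtain ⟨ha, hc, hul, hur, hf⟩ := hfrob
  have hadj : ∀ θ : H, Copyable m u θ →
      (LinearMap.adjoint (m ∘ₗ TensorProduct.mk ℂ H H θ)) ψ = conj ⟪ψ, θ⟫_ℂ • ψ := by
    intro θ hθ
    refine ext_inner_left ℂ fun v => ?_
    rw [LinearMap.adjoint_inner_right, inner_smul_right]
    show ⟪m (θ ⊗ₜ[ℂ] v), ψ⟫_ℂ = conj ⟪ψ, θ⟫_ℂ * ⟪v, ψ⟫_ℂ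
    calc ⟪m (θ ⊗ₜ[ℂ] v), ψ⟫_ℂ = conj ⟪ψ, m (θ ⊗ₜ[ℂ] v)⟫_ℂ := (inner_conj_symm _ _).symm
      _ = conj (⟪ψ, θ⟫_ℂ * ⟪ψ, v⟫_ℂ) := by rw [copyable_inner_mul hψ]
      _ = conj ⟪ψ, θ⟫_ℂ * ⟪v, ψ⟫_ℂ := by rw [map_mul, inner_conj_symm, inner_conj_symm]
  have hkey : ∀ θ : H, Copyable m u θ →
      ⟪ψ, θ⟫_ℂ * ⟪ψ, θ⟫_ℂ = ⟪ψ, θ⟫_ℂ * ⟪ψ ⊗ₜ[ℂ] ψ, LinearMap.adjoint m (u 1)⟫_ℂ := by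
    intro θ hθ
    have h1 : ⟪LinearMap.adjoint m ψ, LinearMap.adjoint m θ⟫_ℂ = ⟪ψ, θ⟫_ℂ * ⟪ψ, θ⟫_ℂ := by
      rw [hψ.1, hθ.1, TensorIP.inner_tmul]
    have h2 : LinearMap.adjoint m θ
        = TensorProduct.map (m ∘ₗ TensorProduct.mk ℂ H H θ) LinearMap.id
            (LinearMap.adjoint m (u 1)) := by
      rw [frob_apply hf, hur]
    have h3 : ⟪LinearMap.adjoint m ψ, LinearMap.adjoint m θ⟫_ℂ
        = ⟪ψ, θ⟫_ℂ * ⟪ψ ⊗ₜ[ℂ] ψ, LinearMap.adjoint m (u 1)⟫_ℂ := by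
      rw [hψ.1, h2, inner_map_map', adjoint_idH, TensorProduct.map_tmul, hadj θ hθ,
        LinearMap.id_coe, id_eq, ← TensorProduct.smul_tmul', inner_smul_left,
        Complex.conj_conj]
    rw [← h1, h3]
  set a := ⟪ψ, ψ⟫_ℂ with ha'
  have ha0 : a ≠ 0 := fun h => copyable_ne_zero hψ (inner_self_eq_zero.mp h)
  have hTa : ⟪ψ ⊗ₜ[ℂ] ψ, LinearMap.adjoint m (u 1)⟫_ℂ = a :=
    (mul_left_cancel₀ ha0 (hkey ψ hψ)).symm
  have hc2 := hkey φ hφ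
  rw [hTa] at hc2
  have h0 : ⟪ψ, φ⟫_ℂ * (⟪ψ, φ⟫_ℂ - a) = 0 := by ring_nf; linear_combination hc2
  rcases mul_eq_zero.mp h0 with h | h
  · exact Or.inl h
  · exact Or.inr (sub_eq_zero.mp h)

private lemma separating (hfrob : IsFrobenius m u) (v : H)
    (hv : ∀ ψ : H, Copyable m u ψ → ⟪ψ, v⟫_ℂ = 0) : v = 0 := by
  have hred := fun n hn => reduced hfrob n hn
  obtain ⟨ha, hc, hul, hur, hf⟩ := hfrob
  letI ringH : CommRing H :=
  { (inferInstance : AddCommGroup H) with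
    mul := fun x y => m (x ⊗ₜ[ℂ] y)
    one := u 1
    mul_assoc := fun x y z => mul_assocH ha x y z
    one_mul := hul
    mul_one := hur
    mul_comm := fun x y => mul_commH hc x y
    left_distrib := fun x y z => by
      show m (x ⊗ₜ[ℂ] (y + z)) = m (x ⊗ₜ[ℂ] y) + m (x ⊗ₜ[ℂ] z)
      rw [TensorProduct.tmul_add, map_add]
    right_distrib := fun x y z => by
      show m ((x + y) ⊗ₜ[ℂ] z) = m (x ⊗ₜ[ℂ] z) + m (y ⊗ₜ[ℂ] z)
      rw [TensorProduct.add_tmul, map_add]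
    zero_mul := fun x => by
      show m ((0 : H) ⊗ₜ[ℂ] x) = 0
      rw [TensorProduct.zero_tmul, map_zero]
    mul_zero := fun x => by
      show m (x ⊗ₜ[ℂ] (0 : H)) = 0
      rw [TensorProduct.tmul_zero, map_zero] }
  have hsmul_mul : ∀ (r : ℂ) (x y : H), r • x * y = r • (x * y) := by
    intro r x y
    show m ((r • x) ⊗ₜ[ℂ] y) = r • m (x ⊗ₜ[ℂ] y)
    rw [← TensorProduct.smul_tmul', map_smul]
  have hmul_smul : ∀ (r : ℂ) (x y : H), x * r • y = r • (x * y) := by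
    intro r x y
    show m (x ⊗ₜ[ℂ] (r • y)) = r • m (x ⊗ₜ[ℂ] y)
    rw [TensorProduct.tmul_smul, map_smul]
  letI algH : Algebra ℂ H := Algebra.ofModule hsmul_mul hmul_smul
  letI : IsScalarTower ℂ H H := ⟨fun r x y => by
    show (r • x) * y = r • (x * y)
    exact hsmul_mul r x y⟩
  letI : IsArtinianRing H := isArtinian_of_tower ℂ inferInstance
  -- the square-zero implies zero property
  have hsq : ∀ x : H, x * x = 0 → x = 0 := fun x hx => hred x hx
  -- every power-zero element is zero
  have hpow : ∀ (k : ℕ) (x : H), x ^ k = 0 → x = 0 := by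
    intro k
    induction k using Nat.strong_induction_on with
    | _ k ih =>
      intro x hx
      rcases k with _ | _ | n
      · have h1 : (1 : H) = 0 := by simpa using hx
        calc x = x * 1 := (mul_one x).symm
          _ = x * 0 := by rw [h1]
          _ = 0 := mul_zero x
      · simpa using hx
      · have h2 : (x ^ (n + 1)) * (x ^ (n + 1)) = 0 := by
          rw [← pow_add]
          have he : n + 1 + (n + 1) = (n + 2) + n := by omega
          rw [he, pow_add, hx, zero_mul]
        exact ih (n + 1) (by omega) x (hsq _ h2)
  -- v lies in the Jacobson radical
  have hvJ : v ∈ Ideal.jacobson (⊥ : Ideal H) := by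
    rw [Ideal.jacobson]
    rw [Submodule.mem_sInf]
    rintro J ⟨-, hJmax⟩
    letI : Field (H ⧸ J) := Ideal.Quotient.field J
    letI : Algebra ℂ (H ⧸ J) := Ideal.Quotient.algebra ℂ
    haveI hfin : @Module.Finite ℂ H _ _ Algebra.toModule :=
      inferInstanceAs (Module.Finite ℂ H)
    haveI : Module.Finite ℂ (H ⧸ J) :=
      Module.Finite.of_surjective (Ideal.Quotient.mkₐ ℂ J).toLinearMap
        (Ideal.Quotient.mkₐ_surjective ℂ J)
    haveI : Algebra.IsIntegral ℂ (H ⧸ J) := Algebra.IsIntegral.of_finite ℂ (H ⧸ J)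
    have hsurj : Function.Surjective (algebraMap ℂ (H ⧸ J)) :=
      IsAlgClosed.algebraMap_bijective_of_isIntegral.2
    have hinj : Function.Injective (algebraMap ℂ (H ⧸ J)) :=
      RingHom.injective _
    let e' : ℂ ≃+* (H ⧸ J) := RingEquiv.ofBijective (algebraMap ℂ (H ⧸ J)) ⟨hinj, hsurj⟩
    -- the character
    let lam : H → ℂ := fun y => e'.symm (Ideal.Quotient.mk J y)
    have hlam_mul : ∀ x y : H, lam (x * y) = lam x * lam y := by
      intro x y
      show e'.symm (Ideal.Quotient.mk J (x * y)) = _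
      rw [map_mul, map_mul]
    have hlam_add : ∀ x y : H, lam (x + y) = lam x + lam y := by
      intro x y
      show e'.symm (Ideal.Quotient.mk J (x + y)) = _
      rw [map_add, map_add]
    have hlam_one : lam 1 = 1 := by
      show e'.symm (Ideal.Quotient.mk J 1) = 1
      rw [map_one, map_one]
    have halg : ∀ c : ℂ, Ideal.Quotient.mk J (algebraMap ℂ H c) = algebraMap ℂ (H ⧸ J) c := by
      intro c
      rfl
    have hlam_smul : ∀ (c : ℂ) (y : H), lam (c • y) = c * lam y := by
      intro c y
      have h1 : c • y = (algebraMap ℂ H c) * y := (Algebra.smul_def c y)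
      show e'.symm (Ideal.Quotient.mk J (c • y)) = c * e'.symm (Ideal.Quotient.mk J y)
      rw [h1, map_mul, halg]
      have h2 : (algebraMap ℂ (H ⧸ J) c) = e' c := rfl
      rw [h2, map_mul, RingEquiv.symm_apply_apply]
    -- build the copyable vector
    let L : H →ₗ[ℂ] ℂ :=
      { toFun := lam
        map_add' := hlam_add
        map_smul' := fun c y => hlam_smul c y }
    let ψ : H := (InnerProductSpace.toDual ℂ H).symm (LinearMap.toContinuousLinearMap L)
    have hψinner : ∀ y : H, ⟪ψ, y⟫_ℂ = lam y := fun y =>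
      InnerProductSpace.toDual_symm_apply
    have hψcop : Copyable m u ψ := by
      constructor
      · refine ext_inner_right ℂ fun t => ?_
        induction t using TensorProduct.induction_on with
        | zero => simp
        | tmul c d =>
          rw [LinearMap.adjoint_inner_left, TensorIP.inner_tmul, hψinner (m (c ⊗ₜ[ℂ] d)),
            hψinner c, hψinner d]
          exact hlam_mul c d
        | add p q hp hq => rw [inner_add_right, inner_add_right, hp, hq]
      · have h1 : ⟪u 1, ψ⟫_ℂ = 1 := by
          have h2 : ⟪ψ, u 1⟫_ℂ = 1 := by
            rw [hψinner]
            exact hlam_one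
          rw [← inner_conj_symm, h2, map_one]
        have h3 := LinearMap.adjoint_inner_right u (1 : ℂ) ψ
        rw [h1] at h3
        have h4 : ((starRingEnd ℂ) 1) * (LinearMap.adjoint u ψ) = 1 := by simpa [RCLike.inner_apply] using h3
        simpa using h4
    have h5 : lam v = 0 := by rw [← hψinner]; exact hv ψ hψcop
    have h6 : Ideal.Quotient.mk J v = 0 := by
      have := congrArg e' h5
      rwa [RingEquiv.apply_symm_apply, map_zero] at this
    exact (Submodule.Quotient.mk_eq_zero J).mp h6
  obtain ⟨k, hk⟩ := IsArtinianRing.isNilpotent_jacobson_bot (R := H)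
  have hvk : v ^ k = 0 := by
    have h7 := Ideal.pow_mem_pow hvJ k
    rw [hk] at h7
    simpa using h7
  exact hpow k v hvk

end Aux

attribute [-instance] TensorProduct.instInner

/-- A commutative †-Frobenius monoid is special iff its copyable elements are normalised;
moreover, for an orthonormal family of copyable elements spanning `H`,
`m ∘ m†` is `x ↦ Σ_i ⟪φ i, x⟫ • φ i`. -/
theorem special_iff_orthonormal (m : H ⊗[ℂ] H →ₗ[ℂ] H) (u : ℂ →ₗ[ℂ] H)
    (hfrob : IsFrobenius m u) :
    ((m ∘ₗ LinearMap.adjoint m = LinearMap.id) ↔ (∀ ψ : H, Copyable m u ψ → ‖ψ‖ = 1))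
      ∧ (∀ (ι : Type) [Fintype ι] (φ : ι → H), Orthonormal ℂ φ →
          (∀ i, Copyable m u (φ i)) → Submodule.span ℂ (Set.range φ) = ⊤ →
          ∀ x : H, m (LinearMap.adjoint m x) = ∑ i, ⟪φ i, x⟫_ℂ • φ i) := by
  have hsep : ∀ v : H, (∀ ψ : H, Copyable m u ψ → ⟪ψ, v⟫_ℂ = 0) → v = 0 :=
    fun v hv => separating hfrob v hv
  constructor
  · constructor
    · -- special → copyables are normalised
      intro hs ψ hψ
      have hne := copyable_ne_zero hψ
      have ha0 : ⟪ψ, ψ⟫_ℂ ≠ 0 := fun h => hne (inner_self_eq_zero.mp h)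
      have h1 : ⟪ψ, ψ⟫_ℂ * ⟪ψ, ψ⟫_ℂ = ⟪ψ, ψ⟫_ℂ := by
        have h2 : ⟪LinearMap.adjoint m ψ, LinearMap.adjoint m ψ⟫_ℂ
            = ⟪ψ, ψ⟫_ℂ * ⟪ψ, ψ⟫_ℂ := by rw [hψ.1, TensorIP.inner_tmul]
        have h3 : ⟪LinearMap.adjoint m ψ, LinearMap.adjoint m ψ⟫_ℂ
            = ⟪m (LinearMap.adjoint m ψ), ψ⟫_ℂ :=
          LinearMap.adjoint_inner_right m _ ψ
        have h4 : m (LinearMap.adjoint m ψ) = ψ := by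
          have h5 := congrArg (fun f => f ψ) hs
          simpa using h5
        rw [h3, h4] at h2
        rw [← h2]
      have h5 : ⟪ψ, ψ⟫_ℂ = 1 := by
        have h6 : ⟪ψ, ψ⟫_ℂ * ⟪ψ, ψ⟫_ℂ = 1 * ⟪ψ, ψ⟫_ℂ := by rw [h1, one_mul]
        exact mul_right_cancel₀ ha0 h6
      have h7 : ‖ψ‖ = 1 := by
        have h6 := norm_eq_sqrt_re_inner (𝕜 := ℂ) ψ
        rw [h5] at h6
        simpa using h6
      exact h7

    · -- copyables normalised → special
      intro hnorm
      have hidem : ∀ φ : H, Copyable m u φ → m (φ ⊗ₜ[ℂ] φ) = φ := by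
        intro φ hφ
        have h9 : ∀ θ : H, Copyable m u θ → ⟪θ, m (φ ⊗ₜ[ℂ] φ) - φ⟫_ℂ = 0 := by
          intro θ hθ
          rw [inner_sub_right, copyable_inner_mul hθ]
          have h11 : ⟪θ, θ⟫_ℂ = 1 := by
            rw [inner_self_eq_norm_sq_to_K, hnorm θ hθ]; norm_num
          rcases copyable_inner_eq hfrob hθ hφ with h | h
          · rw [h]; ring
          · rw [h, h11]; ring
        exact sub_eq_zero.mp (hsep _ h9)
      refine LinearMap.ext fun x => ?_
      have h12 : ∀ φ : H, Copyable m u φ →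
          ⟪φ, m (LinearMap.adjoint m x) - x⟫_ℂ = 0 := by
        intro φ hφ
        rw [inner_sub_right, ← LinearMap.adjoint_inner_left m, hφ.1,
          LinearMap.adjoint_inner_right, hidem φ hφ, sub_self]
      have h13 := hsep _ h12
      show m (LinearMap.adjoint m x) = x
      rw [sub_eq_zero] at h13
      exact h13
  · -- the formula for m ∘ m†
    intro ι _ φ hon hcop hspan x
    classical
    have sep2 : ∀ v : H, (∀ i, ⟪φ i, v⟫_ℂ = 0) → v = 0 := by
      intro v hv
      have hmem : v ∈ (Submodule.span ℂ (Set.range φ))ᗮ := by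
        rw [Submodule.mem_orthogonal]
        intro w hw
        induction hw using Submodule.span_induction with
        | mem w hw => obtain ⟨i, rfl⟩ := hw; exact hv i
        | zero => simp
        | add p q _ _ hp hq => rw [inner_add_left, hp, hq, add_zero]
        | smul c p _ hp => rw [inner_smul_left, hp, mul_zero]
      rw [hspan, Submodule.top_orthogonal_eq_bot] at hmem
      simpa using hmem
    have hij : ∀ i j, ⟪φ i, φ j⟫_ℂ = if i = j then 1 else 0 := fun i j =>
      orthonormal_iff_ite.mp hon i j
    have hsq2 : ∀ j, m (φ j ⊗ₜ[ℂ] φ j) = φ j := by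
      intro j
      refine sub_eq_zero.mp (sep2 _ fun i => ?_)
      rw [inner_sub_right, copyable_inner_mul (hcop i), hij]
      by_cases h : i = j <;> simp [h]
    have hL : m (LinearMap.adjoint m x) = x := by
      refine sub_eq_zero.mp (sep2 _ fun i => ?_)
      rw [inner_sub_right, ← LinearMap.adjoint_inner_left m, (hcop i).1,
        LinearMap.adjoint_inner_right, hsq2 i, sub_self]
    have hR : ∑ i, ⟪φ i, x⟫_ℂ • φ i = x := by
      refine sub_eq_zero.mp (sep2 _ fun j => ?_)
      rw [inner_sub_right, inner_sum]
      simp only [inner_smul_right, hij]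
      simp [Finset.sum_ite_eq]
    rw [hL, hR]
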